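/- arXiv:2209.07645 — 3 statements merged into one kernel-verified Lean document; each statement's English description precedes it below -/
import Mathlib

section
/- Under these assumptions, the Hessian matrix W₂ of E at 0 is symmetric and satisfies the H∞ algebraic Riccati equation Aᵀ W₂ + W₂ A + Cᵀ C − η · W₂ B Bᵀ W₂ = 0. (Quadratic-coefficient part of Theorem 6.) -/
/-!
Write `W₂ v` for the derivative of `∇E` at `0` in direction `v`. Substituting `x = t • v` into
the HJB equation and dividing by `t²`, the rescaled costate `t⁻¹ • ∇E (t • v)` tends to `W₂ v`
(because `∇E 0 = 0`), while the cubic term coming from `N` keeps an extra factor `t`. Letting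
`t → 0` shows that the quadratic form `⟪W₂ v, A v⟫ - (η / 2) ‖Bᵀ W₂ v‖² + ½ ‖C v‖²` vanishes
identically; its polarization is the bilinear form of the Riccati matrix. Symmetry of `W₂` is
Schwarz's theorem.
-/

open Matrix
open scoped RealInnerProductSpace

noncomputable section

def toEuc {n : ℕ} (v : Fin n → ℝ) : EuclideanSpace ℝ (Fin n) := WithLp.toLp 2 v

open Filter Topology InnerProductSpace

section Hamiltonian

variable {F G K : Type*} [NormedAddCommGroup F] [InnerProductSpace ℝ F]
  [NormedAddCommGroup G] [NormedSpace ℝ G] [NormedAddCommGroup K] [NormedSpace ℝ K]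
  (a : F →L[ℝ] F) (b : F →L[ℝ] G) (c : F →L[ℝ] K) (η : ℝ)

/-- The maps `a`, `b`, `c` stand for `A`, `Bᵀ`, `C`, and the costate `w` for `∇E x`. -/
def hjbHamiltonian (N : F →L[ℝ] F →L[ℝ] F) (x w : F) : ℝ :=
  ⟪w, a x + N x x⟫ - (η / 2) * ‖b w‖ ^ 2 + (1 / 2) * ‖c x‖ ^ 2

lemma hjbHamiltonian_smul_smul (N : F →L[ℝ] F →L[ℝ] F) (t : ℝ) (x w : F) :
    hjbHamiltonian a b c η N (t • x) (t • w) = t ^ 2 * hjbHamiltonian a b c η (t • N) x w := by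
  simp only [hjbHamiltonian, map_smul, FunLike.coe_smul, Pi.smul_apply,
    inner_add_right, real_inner_smul_left, real_inner_smul_right, norm_smul, mul_pow,
    Real.norm_eq_abs, sq_abs]
  ring

lemma continuous_hjbHamiltonian_smul (N : F →L[ℝ] F →L[ℝ] F) (v : F) :
    Continuous fun p : ℝ × F => hjbHamiltonian a b c η (p.1 • N) v p.2 := by
  unfold hjbHamiltonian
  fun_prop

theorem hjbHamiltonian_linearization_eq_zero {N : F →L[ℝ] F →L[ℝ] F} {g : F → F}
    {H : F →L[ℝ] F} (hg0 : g 0 = 0) (hg : HasFDerivAt g H 0)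
    (hHJB : ∀ᶠ x in 𝓝 0, hjbHamiltonian a b c η N x (g x) = 0) (v : F) :
    hjbHamiltonian a b c η 0 v (H v) = 0 := by
  have hinv : Tendsto (fun s : ℝ => s⁻¹) atTop (𝓝 0) := tendsto_inv_atTop_zero
  have hscaled : Tendsto (fun s : ℝ => s • g (s⁻¹ • v)) atTop (𝓝 (H v)) := by
    simpa [hg0] using hg.lim_real v
  have hlim : Tendsto (fun s : ℝ => hjbHamiltonian a b c η (s⁻¹ • N) v (s • g (s⁻¹ • v))) atTop
      (𝓝 (hjbHamiltonian a b c η 0 v (H v))) := by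
    simpa only [zero_smul ℝ N, Function.comp_def] using
      ((continuous_hjbHamiltonian_smul a b c η N v).tendsto (0, H v)).comp
        (hinv.prodMk_nhds hscaled)
  refine tendsto_nhds_unique hlim (tendsto_const_nhds.congr' ?_)
  have hsmall : Tendsto (fun s : ℝ => s⁻¹ • v) atTop (𝓝 0) := by
    simpa using hinv.smul_const v
  filter_upwards [hsmall.eventually hHJB, eventually_ne_atTop 0] with s hs hs0
  have hscale := hjbHamiltonian_smul_smul a b c η N s⁻¹ v (s • g (s⁻¹ • v))
  rw [inv_smul_smul₀ hs0, hs] at hscale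
  exact ((mul_eq_zero.mp hscale.symm).resolve_left (by positivity)).symm

end Hamiltonian

section Polarization

variable {F G K : Type*} [NormedAddCommGroup F] [InnerProductSpace ℝ F]
  [NormedAddCommGroup G] [InnerProductSpace ℝ G] [NormedAddCommGroup K] [InnerProductSpace ℝ K]

theorem inner_polar_eq_zero_of_hjbHamiltonian {a : F →L[ℝ] F} {b : F →L[ℝ] G}
    {c : F →L[ℝ] K} {η : ℝ} {H : F →L[ℝ] F} (h : ∀ v, hjbHamiltonian a b c η 0 v (H v) = 0)
    (x y : F) :
    ⟪H x, a y⟫ + ⟪H y, a x⟫ - η * ⟪b (H x), b (H y)⟫ + ⟪c x, c y⟫ = 0 := by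
  have hxy := h (x + y)
  have hx := h x
  have hy := h y
  simp only [hjbHamiltonian, _root_.zero_apply, add_zero, map_add, inner_add_left,
    inner_add_right, norm_add_sq_real] at hxy hx hy
  linear_combination hxy - hx - hy

end Polarization

theorem hasFDerivAt_gradient_of_hasFDerivAt_fderiv {F : Type*} [NormedAddCommGroup F]
    [InnerProductSpace ℝ F] [CompleteSpace F] {f : F → ℝ} {D : F →L[ℝ] StrongDual ℝ F} {x : F}
    (h : HasFDerivAt (fderiv ℝ f) D x) :
    HasFDerivAt (gradient f)
      ((toDual ℝ F).symm.toContinuousLinearEquiv.toContinuousLinearMap ∘L D) x :=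
  (toDual ℝ F).symm.toContinuousLinearEquiv.hasFDerivAt.comp x h

section Hessian

variable {ι : Type*} [Fintype ι] [DecidableEq ι]

lemma EuclideanSpace.toDual_symm_apply (ℓ : StrongDual ℝ (EuclideanSpace ℝ ι)) (k : ι) :
    (toDual ℝ (EuclideanSpace ℝ ι)).symm ℓ k = ℓ (EuclideanSpace.single k 1) := by
  rw [← InnerProductSpace.toDual_symm_apply, EuclideanSpace.inner_single_right]
  simp

lemma EuclideanSpace.strongDual_apply_eq_sum (ℓ : StrongDual ℝ (EuclideanSpace ℝ ι))
    (v : EuclideanSpace ℝ ι) :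
    ℓ v = ∑ j, ℓ (EuclideanSpace.single j 1) * v j := by
  rw [← InnerProductSpace.toDual_symm_apply, PiLp.inner_apply]
  simp [EuclideanSpace.toDual_symm_apply, mul_comm]

def hessianMatrix (f : EuclideanSpace ℝ ι → ℝ) (x : EuclideanSpace ℝ ι) : Matrix ι ι ℝ :=
  Matrix.of fun i j =>
    iteratedFDeriv ℝ 2 f x ![EuclideanSpace.single i 1, EuclideanSpace.single j 1]

variable {f : EuclideanSpace ℝ ι → ℝ} {x : EuclideanSpace ℝ ι}

lemma hessianMatrix_apply (i j : ι) :
    hessianMatrix f x i j =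
      fderiv ℝ (fderiv ℝ f) x (EuclideanSpace.single i 1) (EuclideanSpace.single j 1) := by
  simp [hessianMatrix, iteratedFDeriv_two_apply]

lemma hessianMatrix_transpose (hf : ContDiffAt ℝ 2 f x) :
    (hessianMatrix f x)ᵀ = hessianMatrix f x := by
  ext i j
  simp only [transpose_apply, hessianMatrix_apply]
  exact hf.isSymmSndFDerivAt (by simp [minSmoothness_of_isRCLikeNormedField]) _ _

theorem hasFDerivAt_gradient_hessianMatrix (hf : ContDiffAt ℝ 2 f x) :
    HasFDerivAt (gradient f) (toEuclideanLin (hessianMatrix f x)).toContinuousLinearMap x := by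
  have hD : HasFDerivAt (fderiv ℝ f) (fderiv ℝ (fderiv ℝ f) x) x :=
    ((hf.fderiv_right (m := 1) (by norm_num)).differentiableAt one_ne_zero).hasFDerivAt
  refine (hasFDerivAt_gradient_of_hasFDerivAt_fderiv hD).congr_fderiv ?_
  ext v k
  have hsymm := hf.isSymmSndFDerivAt (by simp [minSmoothness_of_isRCLikeNormedField])
  change (toDual ℝ _).symm (fderiv ℝ (fderiv ℝ f) x v) k =
    (hessianMatrix f x *ᵥ WithLp.ofLp v) k
  rw [EuclideanSpace.toDual_symm_apply, hsymm, EuclideanSpace.strongDual_apply_eq_sum]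
  simp only [mulVec, dotProduct, hessianMatrix_apply]

end Hessian

section Riccati

variable {ι κ μ : Type*} [Fintype ι] [Fintype κ] [Fintype μ] [DecidableEq ι]

lemma inner_toEuclideanLin_toEuclideanLin (M : Matrix κ ι ℝ) (P : Matrix κ ι ℝ)
    (x y : EuclideanSpace ℝ ι) :
    ⟪toEuclideanLin M x, toEuclideanLin P y⟫ = WithLp.ofLp x ⬝ᵥ ((Mᵀ * P) *ᵥ WithLp.ofLp y) := by
  rw [EuclideanSpace.inner_eq_star_dotProduct, ← mulVec_mulVec, dotProduct_mulVec,
    vecMul_transpose, dotProduct_comm]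
  rfl

theorem riccati_of_forall_inner (A : Matrix ι ι ℝ)
    (B : Matrix ι κ ℝ) (C : Matrix μ ι ℝ) (η : ℝ) {W : Matrix ι ι ℝ} (hW : Wᵀ = W)
    (h : ∀ x y : EuclideanSpace ℝ ι,
      ⟪toEuclideanLin W x, toEuclideanLin A y⟫ + ⟪toEuclideanLin W y, toEuclideanLin A x⟫
        - η * ⟪toEuclideanLin Bᵀ (toEuclideanLin W x), toEuclideanLin Bᵀ (toEuclideanLin W y)⟫
        + ⟪toEuclideanLin C x, toEuclideanLin C y⟫ = 0) :
    Aᵀ * W + W * A + Cᵀ * C - η • (W * B * Bᵀ * W) = 0 := by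
  have hform : ∀ x y : EuclideanSpace ℝ ι,
      WithLp.ofLp x ⬝ᵥ ((Aᵀ * W + W * A + Cᵀ * C - η • (W * B * Bᵀ * W)) *ᵥ WithLp.ofLp y)
        = 0 := by
    intro x y
    have hxy := h x y
    have hB : ∀ z, toEuclideanLin Bᵀ (toEuclideanLin W z) = toEuclideanLin (Bᵀ * W) z := by
      intro z; simp
    rw [hB, hB, real_inner_comm (toEuclideanLin A x), inner_toEuclideanLin_toEuclideanLin,
      inner_toEuclideanLin_toEuclideanLin, inner_toEuclideanLin_toEuclideanLin,
      inner_toEuclideanLin_toEuclideanLin] at hxy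
    simp only [transpose_mul, transpose_transpose, hW] at hxy
    simp only [add_mulVec, sub_mulVec, smul_mulVec, dotProduct_add, dotProduct_sub,
      dotProduct_smul, smul_eq_mul, Matrix.mul_assoc] at hxy ⊢
    linear_combination hxy
  ext i j
  simpa using hform (EuclideanSpace.single i 1) (EuclideanSpace.single j 1)

end Riccati

theorem future_energy_quadratic_coefficient_general
    {n m p : ℕ}
    (A : Matrix (Fin n) (Fin n) ℝ) (B : Matrix (Fin n) (Fin m) ℝ)
    (C : Matrix (Fin p) (Fin n) ℝ)
    (N : EuclideanSpace ℝ (Fin n) →L[ℝ] EuclideanSpace ℝ (Fin n) →L[ℝ] EuclideanSpace ℝ (Fin n))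
    (η : ℝ)
    (E : EuclideanSpace ℝ (Fin n) → ℝ)
    (hE : AnalyticAt ℝ E 0)
    (hdE : fderiv ℝ E 0 = 0)
    (hHJB : ∀ᶠ x in nhds (0 : EuclideanSpace ℝ (Fin n)),
      ⟪gradient E x, toEuc (A.mulVec x) + N x x⟫
        - (η / 2) * ‖toEuc (Bᵀ.mulVec (gradient E x : EuclideanSpace ℝ (Fin n)))‖ ^ 2
        + (1 / 2) * ‖toEuc (C.mulVec x)‖ ^ 2 = 0)
    (W₂ : Matrix (Fin n) (Fin n) ℝ)
    (hW₂ : ∀ i j, W₂ i j =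
      iteratedFDeriv ℝ 2 E 0 ![EuclideanSpace.single i 1, EuclideanSpace.single j 1]) :
    W₂ᵀ = W₂ ∧ Aᵀ * W₂ + W₂ * A + Cᵀ * C - η • (W₂ * B * Bᵀ * W₂) = 0 := by
  have hE2 : ContDiffAt ℝ 2 E 0 := hE.contDiffAt
  obtain rfl : W₂ = hessianMatrix E 0 := Matrix.ext hW₂
  have hW : (hessianMatrix E 0)ᵀ = hessianMatrix E 0 := hessianMatrix_transpose hE2
  have hg0 : gradient E 0 = 0 := by simp [gradient, hdE]
  have hQ := hjbHamiltonian_linearization_eq_zero (toEuclideanLin A).toContinuousLinearMap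
    (toEuclideanLin Bᵀ).toContinuousLinearMap (toEuclideanLin C).toContinuousLinearMap η hg0
    (hasFDerivAt_gradient_hessianMatrix hE2) hHJB
  have hP := inner_polar_eq_zero_of_hjbHamiltonian hQ
  simp only [LinearMap.coe_toContinuousLinearMap'] at hP
  exact ⟨hW, riccati_of_forall_inner A B C η hW hP⟩

/-- Quadratic-coefficient part of Theorem 6: the Hessian `W₂` of a solution `E`
of the future H∞ HJB equation is symmetric and solves the H∞ algebraic Riccati
equation `AᵀW₂ + W₂A + CᵀC - η W₂BBᵀW₂ = 0`. -/
theorem future_energy_quadratic_coefficient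
    {n m p : ℕ}
    (A : Matrix (Fin n) (Fin n) ℝ) (B : Matrix (Fin n) (Fin m) ℝ)
    (C : Matrix (Fin p) (Fin n) ℝ)
    (N : EuclideanSpace ℝ (Fin n) →L[ℝ] EuclideanSpace ℝ (Fin n) →L[ℝ] EuclideanSpace ℝ (Fin n))
    (η : ℝ)
    (E : EuclideanSpace ℝ (Fin n) → ℝ)
    (hE : AnalyticAt ℝ E 0)
    (hE0 : E 0 = 0)
    (hdE : fderiv ℝ E 0 = 0)
    (hHJB : ∀ᶠ x in nhds (0 : EuclideanSpace ℝ (Fin n)),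
      ⟪gradient E x, toEuc (A.mulVec x) + N x x⟫
        - (η / 2) * ‖toEuc (Bᵀ.mulVec (gradient E x : EuclideanSpace ℝ (Fin n)))‖ ^ 2
        + (1 / 2) * ‖toEuc (C.mulVec x)‖ ^ 2 = 0)
    (W₂ : Matrix (Fin n) (Fin n) ℝ)
    (hW₂ : ∀ i j, W₂ i j =
      iteratedFDeriv ℝ 2 E 0 ![EuclideanSpace.single i 1, EuclideanSpace.single j 1]) :
    W₂ᵀ = W₂ ∧ Aᵀ * W₂ + W₂ * A + Cᵀ * C - η • (W₂ * B * Bᵀ * W₂) = 0 :=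
  future_energy_quadratic_coefficient_general A B C N η E hE hdE hHJB W₂ hW₂
end
end

section
/- Under these assumptions, the cubic Taylor coefficient of E satisfies, for every x ∈ ℝⁿ, the identity 3 · T₃((A − η·B Bᵀ W₂) x, x, x) + ⟪N(x,x), W₂ x⟫ = 0, where W₂ is the Hessian of E at 0 (which solves the H∞ Riccati equation). (Cubic-coefficient part of Theorem 6, equation (72) of the paper.) -/
/-!
Restrict the HJB equation to the line `t ↦ t • x`. With `d y t = DE(t • x) y` and `bᵢ` the columns
of `B` it reads `t d (A x) t + t² d (N x x) t - η/2 ∑ᵢ (d bᵢ t)² + ‖C x‖²/2 t² = 0` near `t = 0`.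
Since `d y 0 = 0`, `(d y)'(0) = D²E(0)(x, y)` and `(d y)''(0) = D³E(0)(x, x, y)`, the third
derivative at `t = 0` gives
`D³E(0)(x, x, A x) + 2 D²E(0)(x, N x x) - η ∑ᵢ D²E(0)(x, bᵢ) D³E(0)(x, x, bᵢ) = 0`,
which is twice the claim: `W₂ = D²E(0)`, `B Bᵀ W₂ x = ∑ᵢ D²E(0)(x, bᵢ) bᵢ`, and `D³E(0)` is
symmetric.
-/

open Matrix
open scoped RealInnerProductSpace

noncomputable section

open Filter Topology
open scoped ContDiff

theorem Fin.snoc_const_eq_vec2 {α : Type*} (x y : α) :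
    (Fin.snoc (fun _ => x) y : Fin 2 → α) = ![x, y] := by
  ext i; fin_cases i <;> rfl

theorem Fin.snoc_const_eq_vec3 {α : Type*} (x y : α) :
    (Fin.snoc (fun _ => x) y : Fin 3 → α) = ![x, x, y] := by
  ext i; fin_cases i <;> rfl

section Calculus

variable {𝕜 : Type*} [NontriviallyNormedField 𝕜]
  {V : Type*} [NormedAddCommGroup V] [NormedSpace 𝕜 V]
  {F : Type*} [NormedAddCommGroup F] [NormedSpace 𝕜 F]

theorem ContDiffAt.exists_isOpen_contDiffOn {f : V → F} {x : V} {n : WithTop ℕ∞} {k : ℕ}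
    (hf : ContDiffAt 𝕜 n f x) (hk : k ≤ n) : ∃ u, IsOpen u ∧ x ∈ u ∧ ContDiffOn 𝕜 k f u := by
  obtain ⟨u, hu, hxu, hfu⟩ := (contDiffWithinAt_univ.2 hf).contDiffOn' hk (by simp)
  exact ⟨u, hu, hxu, by simpa using hfu⟩

theorem ContDiffAt.iteratedDeriv_comp_smul_zero {f : V → F} {n : WithTop ℕ∞} {k : ℕ}
    (hf : ContDiffAt 𝕜 n f 0) (hk : k ≤ n) (x : V) :
    iteratedDeriv k (fun t : 𝕜 => f (t • x)) 0 = iteratedFDeriv 𝕜 k f 0 (fun _ => x) := by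
  obtain ⟨u, hu, h0u, hfu⟩ := hf.exists_isOpen_contDiffOn hk
  set g := ContinuousLinearMap.toSpanSingleton 𝕜 x
  have hgu : IsOpen (g ⁻¹' u) := hu.preimage g.continuous
  have h0 : (0 : 𝕜) ∈ g ⁻¹' u := by simpa using h0u
  have key := g.iteratedFDerivWithin_comp_right hfu hu.uniqueDiffOn hgu.uniqueDiffOn h0 le_rfl
  rw [iteratedFDerivWithin_of_isOpen k hgu h0, map_zero,
    iteratedFDerivWithin_of_isOpen k hu h0u] at key
  have hfg : (fun t : 𝕜 => f (t • x)) = f ∘ g := by ext t; simp [g]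
  rw [iteratedDeriv_eq_iteratedFDeriv, hfg, key]
  simp [g]

theorem ContDiffAt.iteratedFDeriv_clm_apply_const_apply {G : Type*} [NormedAddCommGroup G]
    [NormedSpace 𝕜 G] {c : V → F →L[𝕜] G} {x : V} {n : WithTop ℕ∞} {k : ℕ}
    (hc : ContDiffAt 𝕜 n c x) (hk : k ≤ n) (u : F) (m : Fin k → V) :
    iteratedFDeriv 𝕜 k (fun y => c y u) x m = iteratedFDeriv 𝕜 k c x m u := by
  obtain ⟨s, hs, hxs, hcs⟩ := hc.exists_isOpen_contDiffOn hk
  rw [← iteratedFDerivWithin_of_isOpen k hs hxs, ← iteratedFDerivWithin_of_isOpen k hs hxs]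
  exact iteratedFDerivWithin_clm_apply_const_apply hs.uniqueDiffOn hcs le_rfl hxs

theorem ContDiffAt.iteratedDeriv_fderiv_apply_comp_smul_zero {E : V → F} {n : WithTop ℕ∞} {k : ℕ}
    (hE : ContDiffAt 𝕜 n E 0) (hk : k + 1 ≤ n) (x y : V) :
    iteratedDeriv k (fun t : 𝕜 => fderiv 𝕜 E (t • x) y) 0
      = iteratedFDeriv 𝕜 (k + 1) E 0 (Fin.snoc (fun _ => x) y) := by
  have hE' : ContDiffAt 𝕜 k (fderiv 𝕜 E) 0 := hE.fderiv_right hk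
  rw [(hE'.clm_apply contDiffAt_const).iteratedDeriv_comp_smul_zero le_rfl,
    hE'.iteratedFDeriv_clm_apply_const_apply le_rfl, iteratedFDeriv_succ_apply_right,
    Fin.init_snoc, Fin.snoc_last]

theorem iteratedFDeriv_three_apply_vec3 (f : V → F) (z x y : V) :
    iteratedFDeriv 𝕜 3 f z ![x, x, y] = iteratedFDeriv 𝕜 2 (fderiv 𝕜 f) z (fun _ => x) y := by
  rw [← Fin.snoc_const_eq_vec3, iteratedFDeriv_succ_apply_right, Fin.init_snoc, Fin.snoc_last]

theorem ContDiffAt.iteratedFDeriv_three_apply_vec3_swap {f : V → F} {z : V}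
    (hf : ContDiffAt 𝕜 ω f z) (x y : V) :
    iteratedFDeriv 𝕜 3 f z ![y, x, x] = iteratedFDeriv 𝕜 3 f z ![x, x, y] := by
  have hσ : ![y, x, x] = ![x, x, y] ∘ Equiv.swap 0 2 := by
    ext i; fin_cases i <;> rfl
  rw [hσ, hf.iteratedFDeriv_comp_perm]

theorem iteratedDeriv_succ_id_mul_zero {f : 𝕜 → 𝕜} {k : ℕ} (hf : ContDiffAt 𝕜 (k + 1) f 0) :
    iteratedDeriv (k + 1) (fun t => t * f t) 0 = (k + 1) * iteratedDeriv k f 0 := by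
  rw [iteratedDeriv_fun_mul (n := k + 1) (f := fun t => t) contDiffAt_id (by exact_mod_cast hf)]
  simp [iteratedDeriv_fun_id_zero, Finset.sum_ite_eq', Nat.choose_one_right]

theorem iteratedDeriv_three_sq_of_eq_zero {h : 𝕜 → 𝕜} {x : 𝕜} (hh : ContDiffAt 𝕜 3 h x)
    (hx : h x = 0) :
    iteratedDeriv 3 (fun t => h t ^ 2) x = 6 * deriv h x * iteratedDeriv 2 h x := by
  simp_rw [pow_two]
  rw [iteratedDeriv_fun_mul hh hh]
  simp [Finset.sum_range_succ, hx, iteratedDeriv_one]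
  ring

theorem iteratedDeriv_three_hjb_poly_zero {ι : Type*} [Fintype ι] {f g : 𝕜 → 𝕜} {h : ι → 𝕜 → 𝕜}
    (hf : ContDiffAt 𝕜 3 f 0) (hg : ContDiffAt 𝕜 3 g 0) (hh : ∀ i, ContDiffAt 𝕜 3 (h i) 0)
    (hh0 : ∀ i, h i 0 = 0) (a c : 𝕜) :
    iteratedDeriv 3 (fun t => t * f t + t ^ 2 * g t - a * ∑ i, h i t ^ 2 + c * t ^ 2) 0
      = 3 * iteratedDeriv 2 f 0 + 6 * deriv g 0
        - 6 * a * ∑ i, deriv (h i) 0 * iteratedDeriv 2 (h i) 0 := by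
  have hsq : (fun t : 𝕜 => t ^ 2 * g t) = fun t => t * (t * g t) := by ext t; ring
  rw [iteratedDeriv_fun_add (by fun_prop) (by fun_prop),
    iteratedDeriv_fun_sub (by fun_prop) (by fun_prop),
    iteratedDeriv_fun_add (by fun_prop) (by fun_prop),
    iteratedDeriv_const_mul _ (by fun_prop), iteratedDeriv_const_mul _ (by fun_prop),
    iteratedDeriv_fun_sum fun i _ => (hh i).pow 2, hsq,
    iteratedDeriv_succ_id_mul_zero (k := 2) (by exact_mod_cast hf),
    iteratedDeriv_succ_id_mul_zero (k := 2) (by fun_prop),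
    iteratedDeriv_succ_id_mul_zero (k := 1) (hg.of_le (by norm_num))]
  simp only [iteratedDeriv_three_sq_of_eq_zero (hh _) (hh0 _), iteratedDeriv_fun_pow_zero,
    iteratedDeriv_one, Finset.mul_sum]
  norm_num
  ring_nf

end Calculus

theorem cubic_taylor_identity_of_hjb_on_line {V : Type*} [NormedAddCommGroup V] [NormedSpace ℝ V]
    {ι : Type*} [Fintype ι] {E : V → ℝ} (hE : ContDiffAt ℝ 4 E 0) (hdE : fderiv ℝ E 0 = 0)
    (η c : ℝ) (x u v : V) (b : ι → V)
    (h : ∀ᶠ t in 𝓝 (0 : ℝ), t * fderiv ℝ E (t • x) u + t ^ 2 * fderiv ℝ E (t • x) v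
      - η / 2 * ∑ i, fderiv ℝ E (t • x) (b i) ^ 2 + c * t ^ 2 = 0) :
    iteratedFDeriv ℝ 3 E 0 ![x, x, u] + 2 * iteratedFDeriv ℝ 2 E 0 ![x, v]
      - η * ∑ i, iteratedFDeriv ℝ 2 E 0 ![x, b i] * iteratedFDeriv ℝ 3 E 0 ![x, x, b i] = 0 := by
  set d : V → ℝ → ℝ := fun y t => fderiv ℝ E (t • x) y
  have hd : ∀ y, ContDiffAt ℝ 3 (d y) 0 := fun y => by
    have hy := (hE.fderiv_right (m := 3) (by norm_num)).clm_apply (contDiffAt_const (c := y))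
    rw [← zero_smul ℝ x] at hy
    exact hy.comp (0 : ℝ) (contDiffAt_id.smul contDiffAt_const)
  have hd0 : ∀ y, d y 0 = 0 := fun y => by simp [d, hdE]
  have hd1 : ∀ y, deriv (d y) 0 = iteratedFDeriv ℝ 2 E 0 ![x, y] := fun y => by
    rw [← iteratedDeriv_one, hE.iteratedDeriv_fderiv_apply_comp_smul_zero (by norm_num),
      Fin.snoc_const_eq_vec2]
  have hd2 : ∀ y, iteratedDeriv 2 (d y) 0 = iteratedFDeriv ℝ 3 E 0 ![x, x, y] := fun y => by
    rw [hE.iteratedDeriv_fderiv_apply_comp_smul_zero (by norm_num), Fin.snoc_const_eq_vec3]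
  have h3 : 3 * iteratedDeriv 2 (d u) 0 + 6 * deriv (d v) 0
      - 6 * (η / 2) * ∑ i, deriv (d (b i)) 0 * iteratedDeriv 2 (d (b i)) 0 = 0 := by
    rw [← iteratedDeriv_three_hjb_poly_zero (hd u) (hd v) (fun i => hd (b i)) (hd0 <| b ·),
      EventuallyEq.iteratedDeriv_eq 3 (g := fun _ => (0 : ℝ)) h]
    simp
  simp only [hd1, hd2] at h3
  linear_combination h3 / 3

section Euclidean

variable {n m : ℕ}

theorem toEuc_mulVec_smul (M : Matrix (Fin m) (Fin n) ℝ) (t : ℝ) (x : EuclideanSpace ℝ (Fin n)) :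
    toEuc (M *ᵥ ⇑(t • x)) = t • toEuc (M *ᵥ x) := by
  simp [toEuc, Matrix.mulVec_smul]

theorem inner_toEuc (g : EuclideanSpace ℝ (Fin n)) (r : Fin n → ℝ) :
    ⟪g, toEuc r⟫ = r ⬝ᵥ g := by
  simp [toEuc, EuclideanSpace.inner_eq_star_dotProduct]

theorem norm_toEuc_mulVec_sq (M : Matrix (Fin m) (Fin n) ℝ) (g : EuclideanSpace ℝ (Fin n)) :
    ‖toEuc (M *ᵥ g)‖ ^ 2 = ∑ i, ⟪g, toEuc (M i)⟫ ^ 2 := by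
  simp_rw [EuclideanSpace.real_norm_sq_eq, inner_toEuc]
  rfl

theorem toEuc_mulVec_eq_sum (M : Matrix (Fin n) (Fin m) ℝ) (w : Fin m → ℝ) :
    toEuc (M *ᵥ w) = ∑ i, w i • toEuc (Mᵀ i) := by
  ext j
  simp [toEuc, Matrix.mulVec, dotProduct, mul_comm]

theorem toEuc_mul_transpose_mul_mulVec (B : Matrix (Fin n) (Fin m) ℝ) (W : Matrix (Fin n) (Fin n) ℝ)
    (x : Fin n → ℝ) :
    toEuc ((B * Bᵀ * W) *ᵥ x) = ∑ i, ⟪toEuc (Bᵀ i), toEuc (W *ᵥ x)⟫ • toEuc (Bᵀ i) := by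
  rw [← mulVec_mulVec, ← mulVec_mulVec, toEuc_mulVec_eq_sum]
  simp only [real_inner_comm, inner_toEuc]
  rfl

theorem EuclideanSpace.eq_sum_single {𝕜 ι : Type*} [RCLike 𝕜] [Fintype ι] [DecidableEq ι]
    (v : EuclideanSpace 𝕜 ι) : v = ∑ j, v j • EuclideanSpace.single j (1 : 𝕜) := by
  simpa [EuclideanSpace.basisFun_apply] using ((EuclideanSpace.basisFun ι 𝕜).sum_repr v).symm

theorem inner_toEuc_mulVec_of_entries
    (H : EuclideanSpace ℝ (Fin n) →L[ℝ] EuclideanSpace ℝ (Fin n) →L[ℝ] ℝ)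
    (W : Matrix (Fin n) (Fin n) ℝ)
    (hW : ∀ i j, W i j = H (EuclideanSpace.single i 1) (EuclideanSpace.single j 1))
    (v x : EuclideanSpace ℝ (Fin n)) :
    ⟪v, toEuc (W *ᵥ x)⟫ = H v x := by
  conv_rhs => rw [EuclideanSpace.eq_sum_single v, EuclideanSpace.eq_sum_single x]
  simp [inner_toEuc, hW, dotProduct, Matrix.mulVec, Finset.mul_sum, mul_comm, mul_left_comm]
  exact Finset.sum_comm

theorem hjb_expression_smul (A : Matrix (Fin n) (Fin n) ℝ) (B : Matrix (Fin n) (Fin m) ℝ)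
    {p : ℕ} (C : Matrix (Fin p) (Fin n) ℝ)
    (N : EuclideanSpace ℝ (Fin n) →L[ℝ] EuclideanSpace ℝ (Fin n) →L[ℝ] EuclideanSpace ℝ (Fin n))
    (η t : ℝ) (g x : EuclideanSpace ℝ (Fin n)) :
    ⟪g, toEuc (A *ᵥ ⇑(t • x)) + N (t • x) (t • x)⟫ - η / 2 * ‖toEuc (Bᵀ *ᵥ ⇑g)‖ ^ 2
        + 1 / 2 * ‖toEuc (C *ᵥ ⇑(t • x))‖ ^ 2
      = t * ⟪g, toEuc (A *ᵥ x)⟫ + t ^ 2 * ⟪g, N x x⟫ - η / 2 * ∑ i, ⟪g, toEuc (Bᵀ i)⟫ ^ 2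
        + ‖toEuc (C *ᵥ x)‖ ^ 2 / 2 * t ^ 2 := by
  have hN : N (t • x) (t • x) = t ^ 2 • N x x := by simp [smul_smul, pow_two]
  rw [toEuc_mulVec_smul, toEuc_mulVec_smul, norm_toEuc_mulVec_sq, hN, inner_add_right,
    real_inner_smul_right, real_inner_smul_right, norm_smul, mul_pow, Real.norm_eq_abs, sq_abs]
  ring

theorem eventually_hjb_on_line {A : Matrix (Fin n) (Fin n) ℝ} {B : Matrix (Fin n) (Fin m) ℝ}
    {p : ℕ} {C : Matrix (Fin p) (Fin n) ℝ}
    {N : EuclideanSpace ℝ (Fin n) →L[ℝ] EuclideanSpace ℝ (Fin n) →L[ℝ] EuclideanSpace ℝ (Fin n)}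
    {η : ℝ} {E : EuclideanSpace ℝ (Fin n) → ℝ}
    (hHJB : ∀ᶠ z in 𝓝 0, ⟪gradient E z, toEuc (A *ᵥ z) + N z z⟫
      - η / 2 * ‖toEuc (Bᵀ *ᵥ ⇑(gradient E z))‖ ^ 2 + 1 / 2 * ‖toEuc (C *ᵥ z)‖ ^ 2 = 0)
    (x : EuclideanSpace ℝ (Fin n)) :
    ∀ᶠ t in 𝓝 (0 : ℝ), t * fderiv ℝ E (t • x) (toEuc (A *ᵥ x)) + t ^ 2 * fderiv ℝ E (t • x) (N x x)
      - η / 2 * ∑ i, fderiv ℝ E (t • x) (toEuc (Bᵀ i)) ^ 2 + ‖toEuc (C *ᵥ x)‖ ^ 2 / 2 * t ^ 2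
      = 0 := by
  have hline : Tendsto (fun t : ℝ => t • x) (𝓝 0) (𝓝 0) :=
    (continuous_id.smul continuous_const).tendsto' 0 0 (zero_smul ℝ x)
  filter_upwards [hline.eventually hHJB] with t ht
  rw [hjb_expression_smul] at ht
  simpa only [inner_gradient_left] using ht

end Euclidean

theorem future_energy_cubic_coefficient_general
    {n m p : ℕ}
    (A : Matrix (Fin n) (Fin n) ℝ) (B : Matrix (Fin n) (Fin m) ℝ)
    (C : Matrix (Fin p) (Fin n) ℝ)
    (N : EuclideanSpace ℝ (Fin n) →L[ℝ] EuclideanSpace ℝ (Fin n) →L[ℝ] EuclideanSpace ℝ (Fin n))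
    (η : ℝ)
    (E : EuclideanSpace ℝ (Fin n) → ℝ)
    (hE : AnalyticAt ℝ E 0)
    (hdE : fderiv ℝ E 0 = 0)
    (hHJB : ∀ᶠ x in nhds (0 : EuclideanSpace ℝ (Fin n)),
      ⟪gradient E x, toEuc (A.mulVec x) + N x x⟫
        - (η / 2) * ‖toEuc (Bᵀ.mulVec (gradient E x : EuclideanSpace ℝ (Fin n)))‖ ^ 2
        + (1 / 2) * ‖toEuc (C.mulVec x)‖ ^ 2 = 0)
    (W₂ : Matrix (Fin n) (Fin n) ℝ)
    (hW₂ : ∀ i j, W₂ i j =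
      iteratedFDeriv ℝ 2 E 0 ![EuclideanSpace.single i 1, EuclideanSpace.single j 1]) :
    ∀ x : EuclideanSpace ℝ (Fin n),
      3 * ((Nat.factorial 3 : ℝ)⁻¹ • iteratedFDeriv ℝ 3 E 0)
          ![toEuc ((A - η • (B * Bᵀ * W₂)).mulVec x), x, x]
        + ⟪N x x, toEuc (W₂.mulVec x)⟫ = 0 := by
  intro x
  have hEω : ContDiffAt ℝ ω E 0 := hE.contDiffAt
  set H := fderiv ℝ (fderiv ℝ E) 0
  have hH : ∀ a b, iteratedFDeriv ℝ 2 E 0 ![a, b] = H a b := fun a b =>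
    iteratedFDeriv_two_apply ..
  have hW : ∀ v, ⟪v, toEuc (W₂ *ᵥ x)⟫ = H x v := fun v => by
    rw [inner_toEuc_mulVec_of_entries H W₂ (fun i j => (hW₂ i j).trans (hH _ _)),
      hEω.isSymmSndFDerivAt (by simp)]
  have hline := cubic_taylor_identity_of_hjb_on_line (hEω.of_le (by simp)) hdE η _ x _ _ _
    (eventually_hjb_on_line hHJB x)
  have hvec : toEuc ((A - η • (B * Bᵀ * W₂)) *ᵥ x)
      = toEuc (A *ᵥ x) - η • ∑ i, H x (toEuc (Bᵀ i)) • toEuc (Bᵀ i) := by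
    simp only [← hW]
    rw [← toEuc_mul_transpose_mul_mulVec, sub_mulVec, smul_mulVec]
    rfl
  rw [_root_.smul_apply, hEω.iteratedFDeriv_three_apply_vec3_swap, hvec, hW]
  simp only [iteratedFDeriv_three_apply_vec3, hH, map_sub, map_smul, map_sum] at hline ⊢
  norm_num [Nat.factorial]
  linear_combination hline / 2

/-- Cubic-coefficient part of Theorem 6 (equation (72)): the cubic Taylor
coefficient `T₃ = (1/3!) iteratedFDeriv ℝ 3 E 0` of a solution `E` of the future
H∞ HJB equation satisfies `3 T₃((A - η B Bᵀ W₂) x, x, x) + ⟪N(x,x), W₂ x⟫ = 0`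
for all `x`, where `W₂` is the Hessian of `E` at `0`. -/
theorem future_energy_cubic_coefficient
    {n m p : ℕ}
    (A : Matrix (Fin n) (Fin n) ℝ) (B : Matrix (Fin n) (Fin m) ℝ)
    (C : Matrix (Fin p) (Fin n) ℝ)
    (N : EuclideanSpace ℝ (Fin n) →L[ℝ] EuclideanSpace ℝ (Fin n) →L[ℝ] EuclideanSpace ℝ (Fin n))
    (η : ℝ)
    (E : EuclideanSpace ℝ (Fin n) → ℝ)
    (hE : AnalyticAt ℝ E 0)
    (hE0 : E 0 = 0)
    (hdE : fderiv ℝ E 0 = 0)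
    (hHJB : ∀ᶠ x in nhds (0 : EuclideanSpace ℝ (Fin n)),
      ⟪gradient E x, toEuc (A.mulVec x) + N x x⟫
        - (η / 2) * ‖toEuc (Bᵀ.mulVec (gradient E x : EuclideanSpace ℝ (Fin n)))‖ ^ 2
        + (1 / 2) * ‖toEuc (C.mulVec x)‖ ^ 2 = 0)
    (W₂ : Matrix (Fin n) (Fin n) ℝ)
    (hW₂ : ∀ i j, W₂ i j =
      iteratedFDeriv ℝ 2 E 0 ![EuclideanSpace.single i 1, EuclideanSpace.single j 1]) :
    ∀ x : EuclideanSpace ℝ (Fin n),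
      3 * ((Nat.factorial 3 : ℝ)⁻¹ • iteratedFDeriv ℝ 3 E 0)
          ![toEuc ((A - η • (B * Bᵀ * W₂)).mulVec x), x, x]
        + ⟪N x x, toEuc (W₂.mulVec x)⟫ = 0 :=
  future_energy_cubic_coefficient_general A B C N η E hE hdE hHJB W₂ hW₂
end
end

section
/- Assume that the only real n×n matrix Z satisfying Aᵀ Z + Z A = 0 is Z = 0. If a real n×n matrix W satisfies 0 = Aᵀ W + W A + Cᵀ C − η · W̄ B Bᵀ W̄, where W̄ := (W + Wᵀ)/2 denotes the symmetric part of W, then W is symmetric (W = Wᵀ), and consequently W satisfies the H∞ algebraic Riccati equation Aᵀ W + W A + Cᵀ C − η · W B Bᵀ W = 0. -/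
/-
Transposing the equation and subtracting shows that the antisymmetric part of `W` lies in the
kernel of `Z ↦ AᵀZ + ZA`, because every other term (`CᵀC` and the quadratic term built from the
symmetric part `W̄`) is symmetric. Injectivity forces `W = Wᵀ`, hence `W̄ = W`.
-/

open Matrix

namespace Matrix

variable {m n R : Type*}

theorem isSymm_transpose_mul_self' [Fintype m] [CommSemiring R] (C : Matrix m n R) :
    (Cᵀ * C).IsSymm := by
  rw [IsSymm, transpose_mul, transpose_transpose]

theorem IsSymm.mul_mul_transpose_mul [Fintype m] [Fintype n] [CommSemiring R]
    {S : Matrix n n R} (hS : S.IsSymm) (B : Matrix n m R) : (S * B * Bᵀ * S).IsSymm := by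
  rw [IsSymm, transpose_mul, transpose_mul, transpose_mul, hS.eq, transpose_transpose,
    Matrix.mul_assoc, Matrix.mul_assoc]

theorem IsSymm.inv_two_smul_add_transpose_self [DivisionRing R] [NeZero (2 : R)]
    {W : Matrix n n R} (hW : W.IsSymm) : (2 : R)⁻¹ • (W + Wᵀ) = W := by
  rw [hW.eq, ← two_smul R W, smul_smul, inv_mul_cancel₀ two_ne_zero, one_smul]

theorem isSymm_of_isSymm_transpose_mul_add_mul_add [Fintype n] [CommRing R]
    {A W K : Matrix n n R} (hinj : ∀ Z : Matrix n n R, Aᵀ * Z + Z * A = 0 → Z = 0)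
    (hK : K.IsSymm) (h : (Aᵀ * W + W * A + K).IsSymm) : W.IsSymm := by
  have htranspose : Wᵀ * A + Aᵀ * Wᵀ = Aᵀ * W + W * A := by
    have := h.eq
    rw [transpose_add, transpose_add, transpose_mul, transpose_mul, transpose_transpose,
      hK.eq] at this
    exact add_right_cancel this
  have hanti : Aᵀ * (Wᵀ - W) + (Wᵀ - W) * A = 0 := by
    rw [mul_sub, sub_mul]
    linear_combination (norm := abel) htranspose
  exact sub_eq_zero.mp (hinj _ hanti)

end Matrix

/-- The symmetry argument from the proof of Theorem 6: if `Z ↦ AᵀZ + ZA` only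
vanishes at `Z = 0`, and `W` satisfies the Riccati-type equation in which the
quadratic term involves only the symmetric part `W̄ = (W + Wᵀ)/2`, then `W` is
symmetric and satisfies the standard H∞ algebraic Riccati equation. -/
theorem riccati_symmetric_part_forces_symmetry
    {n m p : ℕ}
    (A : Matrix (Fin n) (Fin n) ℝ) (B : Matrix (Fin n) (Fin m) ℝ)
    (C : Matrix (Fin p) (Fin n) ℝ) (η : ℝ)
    (hinj : ∀ Z : Matrix (Fin n) (Fin n) ℝ, Aᵀ * Z + Z * A = 0 → Z = 0)
    (W : Matrix (Fin n) (Fin n) ℝ)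
    (hW : (0 : Matrix (Fin n) (Fin n) ℝ) =
      Aᵀ * W + W * A + Cᵀ * C -
        η • (((2:ℝ)⁻¹ • (W + Wᵀ)) * B * Bᵀ * ((2:ℝ)⁻¹ • (W + Wᵀ)))) :
    W = Wᵀ ∧ Aᵀ * W + W * A + Cᵀ * C - η • (W * B * Bᵀ * W) = 0 := by
  set S := (2:ℝ)⁻¹ • (W + Wᵀ)
  have hS : S.IsSymm := (isSymm_add_transpose_self W).smul _
  have hK : (Cᵀ * C - η • (S * B * Bᵀ * S)).IsSymm :=
    (isSymm_transpose_mul_self' C).sub ((hS.mul_mul_transpose_mul B).smul η)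
  have hWsymm : W.IsSymm := isSymm_of_isSymm_transpose_mul_add_mul_add hinj hK <| by
    rw [← add_sub_assoc, ← hW]
    exact isSymm_zero
  have hSW : S = W := hWsymm.inv_two_smul_add_transpose_self
  rw [hSW] at hW
  exact ⟨hWsymm.eq.symm, hW.symm⟩
end
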